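/- For each γ > γ₀ := σ²δ²/(2η²) let b_γ be the unique positive solution of g₁(b_γ) = f₁(γ). Then the map γ ↦ b_γ is strictly increasing on (γ₀, ∞), lim_{γ↓γ₀} b_γ = 0, and lim_{γ↑∞} b_γ = b_∞ := (1/(θ₊ − θ₋))·ln((δ − ηθ₋)/(δ − ηθ₊)); in particular b_∞ > 0 is well-defined (since δ − ηθ₊ > 0) and satisfies g₁(b_∞) = η/δ. -/

import Mathlib

/-! Clearing the denominator, `g₁ x = y` reads `e^{θ₊x}(1 - θ₊y) = e^{θ₋x}(1 - θ₋y)`, which can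
be solved for `x`: `x = G y := (log (1 - θ₋y) - log (1 - θ₊y)) / (θ₊ - θ₋)`, and `G` is continuous
and strictly increasing on `(1/θ₋, 1/θ₊)`, an interval containing the range of `g₁`. Hence
`b_γ = G (f₁ γ)`. Now `f₁` is continuous and strictly increasing with `f₁ γ₀ = 0` and
`f₁ γ → η/δ`, while `G 0 = 0` and `G (η/δ) = b_∞`. That `η/δ` lies in the domain of `G` comes
from `θ±` being roots of the quadratic: `δ - ηθ± = σ²θ±²/2 > 0`. -/

open Real Filter Set

/-- Positive root θ₊ of (σ²/2)r² + ηr − δ = 0. -/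
noncomputable def thetaP (σ η δ : ℝ) : ℝ := (-η + Real.sqrt (η ^ 2 + 2 * σ ^ 2 * δ)) / σ ^ 2

/-- Negative root θ₋ of (σ²/2)r² + ηr − δ = 0. -/
noncomputable def thetaM (σ η δ : ℝ) : ℝ := (-η - Real.sqrt (η ^ 2 + 2 * σ ^ 2 * δ)) / σ ^ 2

/-- h₁(x) = e^{θ₊x} − e^{θ₋x}. -/
noncomputable def h1 (σ η δ : ℝ) (x : ℝ) : ℝ :=
  Real.exp (thetaP σ η δ * x) - Real.exp (thetaM σ η δ * x)

/-- h₁'(x) = θ₊e^{θ₊x} − θ₋e^{θ₋x}. -/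
noncomputable def h1' (σ η δ : ℝ) (x : ℝ) : ℝ :=
  thetaP σ η δ * Real.exp (thetaP σ η δ * x) - thetaM σ η δ * Real.exp (thetaM σ η δ * x)

/-- g₁(b) = h₁(b)/h₁'(b). -/
noncomputable def g1 (σ η δ : ℝ) (b : ℝ) : ℝ := h1 σ η δ b / h1' σ η δ b

/-- f₁(γ) = ηγ/(δ(δ+γ)) − σ²/(η + √(η² + 2σ²(δ+γ))). -/
noncomputable def f1 (σ η δ : ℝ) (γ : ℝ) : ℝ :=
  η * γ / (δ * (δ + γ)) - σ ^ 2 / (η + Real.sqrt (η ^ 2 + 2 * σ ^ 2 * (δ + γ)))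

/-- b_∞ = (1/(θ₊ − θ₋))·ln((δ − ηθ₋)/(δ − ηθ₊)). -/
noncomputable def bInfty (σ η δ : ℝ) : ℝ :=
  1 / (thetaP σ η δ - thetaM σ η δ) *
    Real.log ((δ - η * thetaM σ η δ) / (δ - η * thetaP σ η δ))

open Topology

noncomputable def expRatio (p m x : ℝ) : ℝ :=
  (exp (p * x) - exp (m * x)) / (p * exp (p * x) - m * exp (m * x))

noncomputable def expRatioInv (p m y : ℝ) : ℝ :=
  (log (1 - m * y) - log (1 - p * y)) / (p - m)

section ExpRatio

variable {p m : ℝ}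

lemma mem_Ioo_inv_iff (hm : m < 0) (hp : 0 < p) {y : ℝ} :
    y ∈ Ioo m⁻¹ p⁻¹ ↔ 0 < 1 - m * y ∧ 0 < 1 - p * y := by
  rw [mem_Ioo, ← one_div, ← one_div, div_lt_iff_of_neg hm, lt_div_iff₀ hp, mul_comm y, mul_comm y]
  constructor <;> rintro ⟨h₁, h₂⟩ <;> constructor <;> linarith

lemma expRatio_den_pos (hm : m < 0) (hp : 0 < p) (x : ℝ) :
    0 < p * exp (p * x) - m * exp (m * x) := by
  have := mul_pos hp (exp_pos (p * x))
  have := mul_neg_of_neg_of_pos hm (exp_pos (m * x))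
  linarith

lemma expRatio_eq_iff (hm : m < 0) (hp : 0 < p) {x y : ℝ} :
    expRatio p m x = y ↔ exp (p * x) * (1 - p * y) = exp (m * x) * (1 - m * y) := by
  rw [expRatio, div_eq_iff (expRatio_den_pos hm hp x).ne']
  constructor <;> intro h <;> linarith

lemma expRatio_mem_Ioo (hm : m < 0) (hp : 0 < p) (x : ℝ) : expRatio p m x ∈ Ioo m⁻¹ p⁻¹ := by
  have key := (expRatio_eq_iff hm hp).1 (rfl : expRatio p m x = _)
  generalize expRatio p m x = y at key ⊢
  have hpx := exp_pos (p * x)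
  have hmx := exp_pos (m * x)
  have hpy : 0 < 1 - p * y := by
    by_contra! h
    have hy : 0 < y := by by_contra! h'; nlinarith
    nlinarith [mul_nonpos_of_nonneg_of_nonpos hpx.le h, mul_pos hmx (by nlinarith : 0 < 1 - m * y)]
  refine (mem_Ioo_inv_iff hm hp).2 ⟨?_, hpy⟩
  nlinarith [mul_pos hpx hpy]

lemma expRatioInv_expRatio (hm : m < 0) (hp : 0 < p) (x : ℝ) :
    expRatioInv p m (expRatio p m x) = x := by
  obtain ⟨hmy, hpy⟩ := (mem_Ioo_inv_iff hm hp).1 (expRatio_mem_Ioo hm hp x)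
  have key := congrArg log ((expRatio_eq_iff hm hp).1 (rfl : expRatio p m x = _))
  generalize expRatio p m x = y at key hmy hpy ⊢
  rw [log_mul (exp_pos _).ne' hpy.ne', log_mul (exp_pos _).ne' hmy.ne', log_exp, log_exp] at key
  rw [expRatioInv, div_eq_iff (by linarith)]
  linarith

lemma expRatio_expRatioInv (hm : m < 0) (hp : 0 < p) {y : ℝ} (hy : y ∈ Ioo m⁻¹ p⁻¹) :
    expRatio p m (expRatioInv p m y) = y := by
  obtain ⟨hmy, hpy⟩ := (mem_Ioo_inv_iff hm hp).1 hy
  have hx : p * expRatioInv p m y - m * expRatioInv p m y = log (1 - m * y) - log (1 - p * y) := by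
    rw [← sub_mul, expRatioInv, mul_div_cancel₀ _ (by linarith)]
  set x := expRatioInv p m y
  have hexp : exp (p * x - m * x) = (1 - m * y) / (1 - p * y) := by
    rw [hx, exp_sub, exp_log hmy, exp_log hpy]
  rw [expRatio_eq_iff hm hp, ← eq_div_iff hpy.ne', mul_div_assoc, ← hexp, ← exp_add]
  ring_nf

lemma expRatioInv_zero : expRatioInv p m 0 = 0 := by simp [expRatioInv]

lemma expRatioInv_strictMonoOn (hm : m < 0) (hp : 0 < p) :
    StrictMonoOn (expRatioInv p m) (Ioo m⁻¹ p⁻¹) := by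
  intro y₁ hy₁ y₂ hy₂ h
  obtain ⟨hmy₁, hpy₁⟩ := (mem_Ioo_inv_iff hm hp).1 hy₁
  obtain ⟨hmy₂, hpy₂⟩ := (mem_Ioo_inv_iff hm hp).1 hy₂
  have hlog_m : log (1 - m * y₁) < log (1 - m * y₂) := log_lt_log hmy₁ (by nlinarith)
  have hlog_p : log (1 - p * y₂) < log (1 - p * y₁) := log_lt_log hpy₂ (by nlinarith)
  exact div_lt_div_of_pos_right (by linarith) (by linarith)

lemma expRatioInv_continuousAt (hm : m < 0) (hp : 0 < p) {y : ℝ} (hy : y ∈ Ioo m⁻¹ p⁻¹) :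
    ContinuousAt (expRatioInv p m) y := by
  obtain ⟨hmy, hpy⟩ := (mem_Ioo_inv_iff hm hp).1 hy
  unfold expRatioInv
  fun_prop (disch := positivity)

end ExpRatio

section Roots

variable {σ η δ : ℝ}

lemma g1_eq_expRatio : g1 σ η δ = expRatio (thetaP σ η δ) (thetaM σ η δ) := rfl

lemma delta_sub_eta_mul_root (hσ : σ ≠ 0) {s : ℝ} (hs : s ^ 2 = η ^ 2 + 2 * σ ^ 2 * δ) :
    δ - η * ((-η + s) / σ ^ 2) = σ ^ 2 / 2 * ((-η + s) / σ ^ 2) ^ 2 := by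
  field_simp
  linear_combination -hs

lemma abs_lt_sqrt_discr (hσ : σ ≠ 0) (hδ : 0 < δ) : |η| < √(η ^ 2 + 2 * σ ^ 2 * δ) := by
  rw [lt_sqrt (abs_nonneg η), sq_abs]
  have : 0 < 2 * σ ^ 2 * δ := by positivity
  linarith

lemma thetaP_pos (hσ : σ ≠ 0) (hδ : 0 < δ) : 0 < thetaP σ η δ :=
  div_pos (by linarith [le_abs_self η, abs_lt_sqrt_discr (η := η) hσ hδ]) (by positivity)

lemma thetaM_neg (hσ : σ ≠ 0) (hδ : 0 < δ) : thetaM σ η δ < 0 :=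
  div_neg_of_neg_of_pos (by linarith [neg_abs_le η, abs_lt_sqrt_discr (η := η) hσ hδ])
    (by positivity)

lemma delta_sub_eta_mul_thetaP_pos (hσ : σ ≠ 0) (hδ : 0 < δ) : 0 < δ - η * thetaP σ η δ := by
  have hθ := (thetaP_pos (η := η) hσ hδ).ne'
  rw [thetaP] at hθ ⊢
  rw [delta_sub_eta_mul_root hσ (sq_sqrt (by positivity))]
  positivity

lemma delta_sub_eta_mul_thetaM_pos (hσ : σ ≠ 0) (hδ : 0 < δ) : 0 < δ - η * thetaM σ η δ := by
  have hθ := (thetaM_neg (η := η) hσ hδ).ne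
  rw [thetaM, sub_eq_add_neg (-η)] at hθ ⊢
  rw [delta_sub_eta_mul_root hσ (by rw [neg_sq, sq_sqrt (by positivity)])]
  positivity

lemma one_sub_mul_div (hδ : δ ≠ 0) (θ : ℝ) : 1 - θ * (η / δ) = (δ - η * θ) / δ := by
  field_simp

lemma eta_div_delta_mem_Ioo (hσ : σ ≠ 0) (hδ : 0 < δ) :
    η / δ ∈ Ioo (thetaM σ η δ)⁻¹ (thetaP σ η δ)⁻¹ := by
  have h (θ : ℝ) (hθ : 0 < δ - η * θ) : 0 < 1 - θ * (η / δ) := by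
    rw [one_sub_mul_div hδ.ne']
    positivity
  exact (mem_Ioo_inv_iff (thetaM_neg hσ hδ) (thetaP_pos hσ hδ)).2
    ⟨h _ (delta_sub_eta_mul_thetaM_pos hσ hδ), h _ (delta_sub_eta_mul_thetaP_pos hσ hδ)⟩

lemma bInfty_eq_expRatioInv (hσ : σ ≠ 0) (hδ : 0 < δ) :
    bInfty σ η δ = expRatioInv (thetaP σ η δ) (thetaM σ η δ) (η / δ) := by
  have hP := delta_sub_eta_mul_thetaP_pos (η := η) hσ hδ
  have hM := delta_sub_eta_mul_thetaM_pos (η := η) hσ hδ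
  rw [bInfty, expRatioInv, one_sub_mul_div hδ.ne', one_sub_mul_div hδ.ne',
    ← log_div (div_pos hM hδ).ne' (div_pos hP hδ).ne', div_div_div_cancel_right₀ hδ.ne']
  ring

end Roots

section F1

variable {σ η δ : ℝ}

lemma f1_eq_sub (hδ : δ ≠ 0) {γ : ℝ} (hγ : δ + γ ≠ 0) :
    f1 σ η δ γ = η / δ - η / (δ + γ) - σ ^ 2 / (η + √(η ^ 2 + 2 * σ ^ 2 * (δ + γ))) := by
  rw [f1]
  congr 1
  field_simp
  ring

lemma f1_gamma0 (hη : 0 < η) (hδ : 0 < δ) : f1 σ η δ (σ ^ 2 * δ ^ 2 / (2 * η ^ 2)) = 0 := by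
  have hsqrt : √(η ^ 2 + 2 * σ ^ 2 * (δ + σ ^ 2 * δ ^ 2 / (2 * η ^ 2))) = η + σ ^ 2 * δ / η := by
    rw [show η ^ 2 + 2 * σ ^ 2 * (δ + σ ^ 2 * δ ^ 2 / (2 * η ^ 2)) = (η + σ ^ 2 * δ / η) ^ 2 by
      field_simp; ring]
    exact sqrt_sq (by positivity)
  have : 0 < η + (η + σ ^ 2 * δ / η) := by positivity
  rw [f1, hsqrt]
  field_simp
  ring

lemma f1_strictMonoOn (hη : 0 < η) (hδ : δ ≠ 0) : StrictMonoOn (f1 σ η δ) (Ioi (-δ)) := by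
  intro γ₁ hγ₁ γ₂ hγ₂ h
  rw [mem_Ioi, neg_lt_iff_pos_add'] at hγ₁ hγ₂
  rw [f1_eq_sub hδ hγ₁.ne', f1_eq_sub hδ hγ₂.ne']
  have hsqrt : √(η ^ 2 + 2 * σ ^ 2 * (δ + γ₁)) ≤ √(η ^ 2 + 2 * σ ^ 2 * (δ + γ₂)) :=
    sqrt_le_sqrt (by gcongr)
  have : η / (δ + γ₂) < η / (δ + γ₁) := div_lt_div_of_pos_left hη hγ₁ (by linarith)
  have : σ ^ 2 / (η + √(η ^ 2 + 2 * σ ^ 2 * (δ + γ₂))) ≤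
      σ ^ 2 / (η + √(η ^ 2 + 2 * σ ^ 2 * (δ + γ₁))) := by
    gcongr
  linarith

lemma f1_continuousAt (hη : 0 < η) {γ : ℝ} (hγ : δ * (δ + γ) ≠ 0) :
    ContinuousAt (f1 σ η δ) γ := by
  have : η + √(η ^ 2 + 2 * σ ^ 2 * (δ + γ)) ≠ 0 := by positivity
  unfold f1
  fun_prop (disch := assumption)

lemma tendsto_f1_atTop (hσ : σ ≠ 0) (hδ : δ ≠ 0) : Tendsto (f1 σ η δ) atTop (𝓝 (η / δ)) := by
  have hlin : Tendsto (fun γ : ℝ => δ + γ) atTop atTop := tendsto_atTop_add_const_left _ δ tendsto_id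
  have hsqrt : Tendsto (fun γ : ℝ => η + √(η ^ 2 + 2 * σ ^ 2 * (δ + γ))) atTop atTop :=
    tendsto_atTop_add_const_left _ _ <| tendsto_sqrt_atTop.comp <|
      tendsto_atTop_add_const_left _ _ (hlin.const_mul_atTop (by positivity))
  have h := ((tendsto_const_nhds (x := η / δ)).sub ((tendsto_const_nhds (x := η)).div_atTop hlin)).sub
    ((tendsto_const_nhds (x := σ ^ 2)).div_atTop hsqrt)
  rw [sub_zero, sub_zero] at h
  refine h.congr' ?_
  filter_upwards [eventually_gt_atTop (-δ)] with γ hγ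
  exact (f1_eq_sub hδ (by linarith)).symm

end F1

theorem barrier_map_monotone_and_limits (σ η δ : ℝ) (b : ℝ → ℝ)
    (hσ : 0 < σ) (hη : 0 < η) (hδ : 0 < δ)
    (hb : ∀ γ : ℝ, σ ^ 2 * δ ^ 2 / (2 * η ^ 2) < γ →
      0 < b γ ∧ g1 σ η δ (b γ) = f1 σ η δ γ) :
    StrictMonoOn b (Set.Ioi (σ ^ 2 * δ ^ 2 / (2 * η ^ 2))) ∧
    Tendsto b
      (nhdsWithin (σ ^ 2 * δ ^ 2 / (2 * η ^ 2)) (Set.Ioi (σ ^ 2 * δ ^ 2 / (2 * η ^ 2))))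
      (nhds 0) ∧
    Tendsto b atTop (nhds (bInfty σ η δ)) ∧
    0 < δ - η * thetaP σ η δ ∧
    0 < bInfty σ η δ ∧
    g1 σ η δ (bInfty σ η δ) = η / δ := by
  set γ₀ := σ ^ 2 * δ ^ 2 / (2 * η ^ 2)
  have hm := thetaM_neg (η := η) hσ.ne' hδ
  have hp := thetaP_pos (η := η) hσ.ne' hδ
  have hzero : (0 : ℝ) ∈ Ioo (thetaM σ η δ)⁻¹ (thetaP σ η δ)⁻¹ := ⟨inv_lt_zero.2 hm, inv_pos.2 hp⟩
  have hηδ := eta_div_delta_mem_Ioo (η := η) hσ.ne' hδ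
  have hb_eq : EqOn (expRatioInv (thetaP σ η δ) (thetaM σ η δ) ∘ f1 σ η δ) b (Ioi γ₀) :=
    fun γ hγ => by rw [Function.comp_apply, ← (hb γ hγ).2, g1_eq_expRatio, expRatioInv_expRatio hm hp]
  have hf1_mem : MapsTo (f1 σ η δ) (Ioi γ₀) (Ioo (thetaM σ η δ)⁻¹ (thetaP σ η δ)⁻¹) :=
    fun γ hγ => (hb γ hγ).2 ▸ expRatio_mem_Ioo hm hp _
  refine ⟨?_, ?_, ?_, delta_sub_eta_mul_thetaP_pos hσ.ne' hδ, ?_, ?_⟩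
  · have hsub : Ioi γ₀ ⊆ Ioi (-δ) := Ioi_subset_Ioi (by linarith [show 0 ≤ γ₀ by positivity])
    exact ((expRatioInv_strictMonoOn hm hp).comp ((f1_strictMonoOn hη hδ.ne').mono hsub)
      hf1_mem).congr hb_eq
  · have h := ((expRatioInv_continuousAt hm hp hzero).comp_of_eq
      (f1_continuousAt hη (by positivity)) (f1_gamma0 hη hδ)).tendsto
    rw [Function.comp_apply, f1_gamma0 hη hδ, expRatioInv_zero] at h
    exact (h.mono_left nhdsWithin_le_nhds).congr' (eventually_nhdsWithin_of_forall hb_eq)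
  · have h := (expRatioInv_continuousAt hm hp hηδ).tendsto.comp (tendsto_f1_atTop hσ.ne' hδ.ne')
    rw [← bInfty_eq_expRatioInv hσ.ne' hδ] at h
    exact h.congr' ((eventually_gt_atTop γ₀).mono hb_eq)
  · rw [bInfty_eq_expRatioInv hσ.ne' hδ, ← expRatioInv_zero (p := thetaP σ η δ) (m := thetaM σ η δ)]
    exact expRatioInv_strictMonoOn hm hp hzero hηδ (by positivity)
  · rw [bInfty_eq_expRatioInv hσ.ne' hδ, g1_eq_expRatio]
    exact expRatio_expRatioInv hm hp hηδ
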